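/- arXiv:1209.5608 — 2 statements merged into one kernel-verified Lean document; each statement's English description precedes it below -/
import Mathlib

section
/- Let n ≥ 1 be a real number, c ≥ 0 a real number, and k a natural number with k ≤ log₂ n. Let w : ℕ → ℝ satisfy w(i+1) ≤ w(i) for all i < k, w(i) > 0 for all i ≤ k, w(0) ≤ n, and w(k) ≥ 1. Then ∑_{i=0}^{k-1} c·(1 + log₂(w(i) / w(i+1))) ≤ 2·c·log₂ n. -/
/-!
Writing `logb 2 (w i / w (i+1)) = logb 2 (w i) - logb 2 (w (i+1))`, the sum telescopes to
`c k + c (logb 2 (w 0) - logb 2 (w k))`. The first term is at most `c logb 2 n` because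
`k ≤ logb 2 n`, and so is the second, because `w k ≥ 1` and `w 0 ≤ n`.
-/

open Finset Real

theorem sum_range_logb_div_eq_sub (b : ℝ) (w : ℕ → ℝ) (k : ℕ) (hw : ∀ i ≤ k, w i ≠ 0) :
    ∑ i ∈ range k, logb b (w i / w (i + 1)) = logb b (w 0) - logb b (w k) := by
  have hdiv : ∀ i ∈ range k,
      logb b (w i / w (i + 1)) = logb b (w i) - logb b (w (i + 1)) := fun i hi =>
    logb_div (hw i (mem_range.mp hi).le) (hw (i + 1) (mem_range.mp hi))
  rw [sum_congr rfl hdiv, sum_range_sub' (fun i => logb b (w i))]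

theorem stmt_2_general (n c : ℝ) (hc : 0 ≤ c) (k : ℕ)
    (hk : (k : ℝ) ≤ Real.logb 2 n) (w : ℕ → ℝ)
    (hpos : ∀ i ≤ k, 0 < w i)
    (h0 : w 0 ≤ n)
    (hlast : 1 ≤ w k) :
    ∑ i ∈ Finset.range k, c * (1 + Real.logb 2 (w i / w (i + 1))) ≤
      2 * c * Real.logb 2 n := by
  have hsum : ∑ i ∈ range k, c * (1 + logb 2 (w i / w (i + 1)))
      = c * k + c * (logb 2 (w 0) - logb 2 (w k)) := by
    rw [← mul_sum, sum_add_distrib, sum_range_logb_div_eq_sub 2 w k fun i hi => (hpos i hi).ne']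
    simp [mul_add]
  have hw0 : logb 2 (w 0) ≤ logb 2 n :=
    logb_le_logb_of_le one_lt_two (hpos 0 k.zero_le) h0
  have hwk : 0 ≤ logb 2 (w k) := logb_nonneg one_lt_two hlast
  have hratio : c * (logb 2 (w 0) - logb 2 (w k)) ≤ c * logb 2 n :=
    mul_le_mul_of_nonneg_left (by linarith) hc
  have hdepth : c * k ≤ c * logb 2 n := mul_le_mul_of_nonneg_left hk hc
  rw [hsum]
  linarith

theorem stmt_2 (n c : ℝ) (hn : 1 ≤ n) (hc : 0 ≤ c) (k : ℕ)
    (hk : (k : ℝ) ≤ Real.logb 2 n) (w : ℕ → ℝ)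
    (hmono : ∀ i < k, w (i + 1) ≤ w i)
    (hpos : ∀ i ≤ k, 0 < w i)
    (h0 : w 0 ≤ n)
    (hlast : 1 ≤ w k) :
    ∑ i ∈ Finset.range k, c * (1 + Real.logb 2 (w i / w (i + 1))) ≤
      2 * c * Real.logb 2 n :=
  stmt_2_general n c hc k hk w hpos h0 hlast
end

section
/- Define inductively the set of rank trees: a single leaf carrying a positive natural weight w is a rank tree of rank ⌊log₂ w⌋ (i.e., Nat.log 2 w) whose total weight is w; and if T₁ and T₂ are rank trees of the same rank r, then the tree with a new root whose two subtrees are T₁ and T₂ is a rank tree of rank r + 1 whose total weight is the sum of the total weights of T₁ and T₂. Then in every rank tree of rank r, every leaf carrying weight w lies at depth exactly r − ⌊log₂ w⌋, where depth is the number of edges on the path from the root to the leaf. -/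
/-- Rank trees, indexed by rank and total weight: a leaf carrying a positive
weight `w` is a rank tree of rank `⌊log₂ w⌋` and weight `w`; two rank trees of
the same rank `r` may be joined under a new root, giving a rank tree of rank
`r + 1` whose weight is the sum of the weights. -/
inductive RankTree : ℕ → ℕ → Type where
  | leaf (w : ℕ) (hw : 0 < w) : RankTree (Nat.log 2 w) w
  | node (r : ℕ) {w₁ w₂ : ℕ} (T₁ : RankTree r w₁) (T₂ : RankTree r w₂) :
      RankTree (r + 1) (w₁ + w₂)

/-- `LeafAt T w d` means the rank tree `T` has a leaf carrying weight `w` at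
depth `d` (number of edges from the root). -/
inductive LeafAt : ∀ {r wt : ℕ}, RankTree r wt → ℕ → ℕ → Prop where
  | leaf (w : ℕ) (hw : 0 < w) : LeafAt (RankTree.leaf w hw) w 0
  | left {r w₁ w₂ : ℕ} {T₁ : RankTree r w₁} {T₂ : RankTree r w₂} {w d : ℕ} :
      LeafAt T₁ w d → LeafAt (RankTree.node r T₁ T₂) w (d + 1)
  | right {r w₁ w₂ : ℕ} {T₁ : RankTree r w₁} {T₂ : RankTree r w₂} {w d : ℕ} :
      LeafAt T₂ w d → LeafAt (RankTree.node r T₁ T₂) w (d + 1)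

theorem LeafAt.log_add_depth {r wt w d : ℕ} {T : RankTree r wt} (h : LeafAt T w d) :
    Nat.log 2 w + d = r := by
  induction h with
  | leaf => rfl
  | left _ ih => rw [← ih]; rfl
  | right _ ih => rw [← ih]; rfl

theorem stmt_5 (r wt : ℕ) (T : RankTree r wt) (w d : ℕ)
    (h : LeafAt T w d) : d = r - Nat.log 2 w :=
  Nat.eq_sub_of_add_eq' h.log_add_depth
end
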